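/- arXiv:2604.10525 — 4 statements merged into one kernel-verified Lean document; each statement's English description precedes it below -/
import Mathlib

section
/- Let 0 < β·γ < 1 with β ≥ 0, γ > 0, λ > 0, and suppose λ ≤ (γ/β)^(Δ/2) for an integer Δ ≥ 2 (with the convention γ/β = +∞ if β = 0). Let D = Δ - 1 and f(x) = λ·((βx+1)/(x+γ))^D. Then the unique positive fixed point x̂ of f (i.e., x̂ = f(x̂)) satisfies x̂ ≤ √(γ/β). -/
/-!
If `β x̂² > γ`, the identity `β (x + γ)² - γ (β x + 1)² = (1 - β γ) (β x² - γ)` bounds the ratio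
`r = (β x̂ + 1) / (x̂ + γ)` by `γ r² < β`. Squaring the fixed point equation `x̂ = λ r^D` then gives
`γ^D β x̂² = β λ² (γ r²)^D ≤ λ² β^Δ ≤ γ^Δ`, that is `β x̂² ≤ γ`, a contradiction.
-/

section TwoSpin

variable {K : Type*} [Field K] [LinearOrder K] [IsStrictOrderedRing K]

lemma mul_ratio_sq_lt_of_lt_mul_sq {β γ x : K} (hden : 0 < x + γ) (hanti : β * γ < 1)
    (hx : γ < β * x ^ 2) :
    γ * ((β * x + 1) / (x + γ)) ^ 2 < β := by
  have key : β * (x + γ) ^ 2 - γ * (β * x + 1) ^ 2 = (1 - β * γ) * (β * x ^ 2 - γ) := by ring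
  have hpos : 0 < (1 - β * γ) * (β * x ^ 2 - γ) := mul_pos (by linarith) (by linarith)
  rw [div_pow, mul_div_assoc', div_lt_iff₀ (by positivity)]
  linarith

lemma pow_mul_mul_sq_le_of_eq_mul_pow {β γ lam x r : K} {D : ℕ} (hβ : 0 ≤ β) (hγ : 0 ≤ γ)
    (hr : γ * r ^ 2 ≤ β) (hfix : x = lam * r ^ D) :
    γ ^ D * (β * x ^ 2) ≤ lam ^ 2 * β ^ (D + 1) :=
  calc γ ^ D * (β * x ^ 2) = β * lam ^ 2 * (γ * r ^ 2) ^ D := by rw [hfix]; ring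
    _ ≤ β * lam ^ 2 * β ^ D := by gcongr
    _ = lam ^ 2 * β ^ (D + 1) := by ring

end TwoSpin

/-- `λ ≤ (γ/β)^(Δ/2)` is stated as `λ² β^Δ ≤ γ^Δ` and `x̂ ≤ √(γ/β)` as `β x̂² ≤ γ`; for `β = 0` these
encode the convention `γ/β = +∞`. -/
theorem stmt_0_general (β γ lam x : ℝ) (Δ : ℕ)
    (hβ : 0 ≤ β) (hγ : 0 < γ)
    (hanti : β * γ < 1) (hΔ : 2 ≤ Δ)
    (hfield : lam ^ 2 * β ^ Δ ≤ γ ^ Δ)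
    (hx : 0 < x)
    (hfix : x = lam * ((β * x + 1) / (x + γ)) ^ (Δ - 1)) :
    β * x ^ 2 ≤ γ := by
  by_contra! hbig
  obtain ⟨D, rfl⟩ : ∃ D, Δ = D + 1 := ⟨Δ - 1, by omega⟩
  have hr := mul_ratio_sq_lt_of_lt_mul_sq (by linarith) hanti hbig
  have hbound := pow_mul_mul_sq_le_of_eq_mul_pow hβ hγ.le hr.le hfix
  have hsmall : γ ^ D * (β * x ^ 2) ≤ γ ^ D * γ := by
    rw [← pow_succ]
    exact hbound.trans hfield
  exact hbig.not_ge (le_of_mul_le_mul_left hsmall (by positivity))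

/-- The unique positive fixed point of the tree recursion
`f(x) = λ ((βx+1)/(x+γ))^D` of an antiferromagnetic two-spin system with
`λ ≤ (γ/β)^(Δ/2)` satisfies `x̂ ≤ √(γ/β)`.  The hypothesis is stated as
`λ² β^Δ ≤ γ^Δ` and the conclusion as `β x̂² ≤ γ`, which for `β > 0` are
equivalent to the original forms and for `β = 0` encode the convention
`γ/β = +∞`. -/
theorem stmt_0 (β γ lam x : ℝ) (Δ : ℕ)
    (hβ : 0 ≤ β) (hγ : 0 < γ) (hlam : 0 < lam)
    (hanti : β * γ < 1) (hΔ : 2 ≤ Δ)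
    (hfield : lam ^ 2 * β ^ Δ ≤ γ ^ Δ)
    (hx : 0 < x)
    (hfix : x = lam * ((β * x + 1) / (x + γ)) ^ (Δ - 1)) :
    β * x ^ 2 ≤ γ :=
  stmt_0_general β γ lam x Δ hβ hγ hanti hΔ hfield hx hfix
end

section
/- Let μ be a distribution over {0,1}^m, θ ∈ (0,1]^m, and π = μ·D_{1→θ} the pushforward under the down operator. Define the correlation matrix Cor_ν(i,j) = ν(j occupied | i occupied) − ν(j occupied) when ν(i occupied) ∈ (0,1), and 0 otherwise. Then λ_max(Cor_μ) ≤ λ_max(Cor_π) · max_{i∈[m]} θᵢ^{-1}. -/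
/-!
Write `p` for the marginals of a distribution `ν` and `Cov_ν = P - p pᵀ` for its covariance
matrix, `P i j` being the probability that `i` and `j` are both occupied. Where `p i ∈ (0,1)`
the row `i` of `Cor_ν` is that of `Cov_ν` divided by `p i`; where `p i ∈ {0,1}` both rows
vanish. Hence `Cor_ν = diag(q)⁻¹ Cov_ν` for every positive `q` agreeing with `p` on `(0,1)`,
and such a matrix is similar to the symmetric `diag(√q)⁻¹ Cov_ν diag(√q)⁻¹`, whose top
eigenvalue dominates `xᵀ Cov_ν x / ∑ qᵢ xᵢ²` for every `x`.

The down operator scales the probability that a set `A` is occupied by `∏_{k ∈ A} θ k`, so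
`p^π = θ p` and `Cov_π = D_θ Cov_μ D_θ + diag(θ (1 - θ) p) ⪰ D_θ Cov_μ D_θ`. If
`Cor_μ v = a v`, then `a ∑ qᵢ vᵢ² = vᵀ Cov_μ v ≤ wᵀ Cov_π w` for `w = v / θ`; with the
weights `θ q` for `π` the Rayleigh bound gives `wᵀ Cov_π w ≤ b ∑ qᵢ vᵢ² / θᵢ` for the top
eigenvalue `b ≥ 0` of `Cor_π`, and `∑ qᵢ vᵢ² / θᵢ ≤ (max θᵢ⁻¹) ∑ qᵢ vᵢ²`.
-/

open Finset

/-- The marginal of a distribution `ν` on `{0,1}^m` at coordinate `i`. -/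
noncomputable def margin {m : ℕ} (ν : (Fin m → Bool) → ℝ) (i : Fin m) : ℝ :=
  ∑ S : Fin m → Bool, if S i then ν S else 0

/-- The correlation matrix of a distribution `ν` on `{0,1}^m`:
`Cor_ν(i,j) = ν(j occupied | i occupied) − ν(j occupied)` when
`ν(i occupied) ∈ (0,1)`, and `0` otherwise. -/
noncomputable def corMatrix {m : ℕ} (ν : (Fin m → Bool) → ℝ) :
    Matrix (Fin m) (Fin m) ℝ :=
  Matrix.of fun i j =>
    if 0 < margin ν i ∧ margin ν i < 1 then
      (∑ S : Fin m → Bool, if S i ∧ S j then ν S else 0) / margin ν i -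
        margin ν j
    else 0

/-- Transition probability of the down operator `D_{1→θ}`. -/
noncomputable def downKernel {m : ℕ} (θ : Fin m → ℝ) (S T : Fin m → Bool) : ℝ :=
  ∏ i : Fin m,
    if S i then (if T i then θ i else 1 - θ i) else (if T i then 0 else 1)

/-- The pushforward `μ D_{1→θ}` of `μ` under the down operator. -/
noncomputable def downDist {m : ℕ} (μ : (Fin m → Bool) → ℝ) (θ : Fin m → ℝ) :
    (Fin m → Bool) → ℝ :=
  fun T => ∑ S : Fin m → Bool, μ S * downKernel θ S T

open Matrix Module.End

theorem LinearMap.IsSymmetric.exists_hasEigenvalue_forall_inner_le {E : Type*}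
    [NormedAddCommGroup E] [InnerProductSpace ℝ E] [FiniteDimensional ℝ E] [Nontrivial E]
    {T : E →ₗ[ℝ] E} (hT : T.IsSymmetric) :
    ∃ b, HasEigenvalue T b ∧ ∀ x, inner ℝ (T x) x ≤ b * ‖x‖ ^ 2 := by
  refine ⟨_, hT.hasEigenvalue_iSup_of_finiteDimensional, fun x => ?_⟩
  rcases eq_or_ne x 0 with rfl | hx
  · simp
  obtain ⟨c, hc⟩ := (LinearMap.toContinuousLinearMap T).bddAbove_rayleighQuotient
  rw [← div_le_iff₀ (by positivity)]
  refine le_ciSup (f := fun x : {x : E // x ≠ 0} => inner ℝ (T x) (x : E) / ‖(x : E)‖ ^ 2)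
    ⟨c, ?_⟩ ⟨x, hx⟩
  rintro _ ⟨y, rfl⟩
  exact (le_abs_self _).trans (hc ⟨y, rfl⟩)

theorem Matrix.IsSymm.exists_hasEigenvalue_forall_dotProduct_mulVec_le {ι : Type*} [Fintype ι]
    [DecidableEq ι] [Nonempty ι] {S : Matrix ι ι ℝ} (hS : S.IsSymm) :
    ∃ b, HasEigenvalue (toLin' S) b ∧ ∀ x, x ⬝ᵥ S *ᵥ x ≤ b * (x ⬝ᵥ x) := by
  have hT : (toEuclideanLin S).IsSymmetric := isSymmetric_toEuclideanLin_iff.mpr hS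
  obtain ⟨b, hb, hle⟩ := hT.exists_hasEigenvalue_forall_inner_le
  refine ⟨b, ?_, fun x => ?_⟩
  · rw [hasEigenvalue_iff_mem_spectrum, spectrum_toLin', ← spectrum_toLpLin 2,
      ← hasEigenvalue_iff_mem_spectrum]
    exact hb
  · have h := hle (WithLp.toLp 2 x)
    rw [← real_inner_self_eq_norm_sq] at h
    change x ⬝ᵥ star (S *ᵥ x) ≤ b * (x ⬝ᵥ star x) at h
    simpa only [star_trivial, dotProduct_comm x] using h

theorem exists_hasEigenvalue_forall_dotProduct_mulVec_le_of_mul_eq {ι : Type*} [Fintype ι]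
    [DecidableEq ι] [Nonempty ι] {C K : Matrix ι ι ℝ} (hK : K.IsSymm) {q : ι → ℝ}
    (hq : ∀ i, 0 < q i) (hC : ∀ i j, q i * C i j = K i j) :
    ∃ b, HasEigenvalue (toLin' C) b ∧ ∀ x, x ⬝ᵥ K *ᵥ x ≤ b * ∑ i, q i * x i ^ 2 := by
  set s : ι → ℝ := fun i => √(q i)
  have hs : ∀ i, 0 < s i := fun i => Real.sqrt_pos.mpr (hq i)
  have hss : ∀ i, s i * s i = q i := fun i => Real.mul_self_sqrt (hq i).le
  have hCK : ∀ i j, C i j = K i j / (s i * s i) := fun i j => by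
    rw [hss, ← hC, mul_div_cancel_left₀ _ (hq i).ne']
  -- `C = diag(q)⁻¹ K` is similar to the symmetric matrix `S = diag(s)⁻¹ K diag(s)⁻¹`.
  set S : Matrix ι ι ℝ := of fun i j => K i j / (s i * s j)
  have hS : S.IsSymm := IsSymm.ext fun i j => by simp only [S, of_apply, hK.apply, mul_comm]
  obtain ⟨b, hb, hle⟩ := hS.exists_hasEigenvalue_forall_dotProduct_mulVec_le
  refine ⟨b, ?_, fun x => ?_⟩
  · obtain ⟨u, hu⟩ := hb.exists_hasEigenvector
    have hSu : S *ᵥ u = b • u := by simpa using hu.apply_eq_smul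
    refine hasEigenvalue_of_hasEigenvector (x := fun i => u i / s i)
      ⟨mem_eigenspace_iff.mpr ?_, fun h => hu.2 (funext fun i => ?_)⟩
    · ext i
      have := congrFun hSu i
      simp only [toLin'_apply, mulVec, dotProduct, Pi.smul_apply, smul_eq_mul, S, of_apply,
        hCK] at this ⊢
      rw [← mul_div_assoc, ← this, sum_div]
      refine sum_congr rfl fun j _ => ?_
      field_simp [(hs i).ne', (hs j).ne']
    · simpa [(hs i).ne'] using congrFun h i
  · have h := hle (s * x)
    convert h using 1
    · simp only [dotProduct, mulVec, Pi.mul_apply, S, of_apply, mul_sum]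
      refine sum_congr rfl fun i _ => sum_congr rfl fun j _ => ?_
      field_simp [(hs i).ne', (hs j).ne']
    · simp only [dotProduct, Pi.mul_apply, ← hss]
      congr 1
      exact sum_congr rfl fun i _ => by ring

theorem mul_sum_mul_sq_eq_dotProduct_mulVec {ι : Type*} [Fintype ι] {C K : Matrix ι ι ℝ}
    {q : ι → ℝ} (hC : ∀ i j, q i * C i j = K i j) {a : ℝ} {v : ι → ℝ} (hv : C *ᵥ v = a • v) :
    a * ∑ i, q i * v i ^ 2 = v ⬝ᵥ K *ᵥ v := by
  rw [mul_sum]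
  refine sum_congr rfl fun i _ => ?_
  have := congrFun hv i
  simp only [mulVec, dotProduct, Pi.smul_apply, smul_eq_mul] at this ⊢
  simp only [← hC, mul_assoc, ← mul_sum, this]
  ring

variable {m : ℕ}

theorem downKernel_nonneg {θ : Fin m → ℝ} (hθ : ∀ i, θ i ∈ Set.Icc 0 1) (S T : Fin m → Bool) :
    0 ≤ downKernel θ S T :=
  prod_nonneg fun k _ => by
    have := hθ k
    split_ifs <;> linarith [this.1, this.2]

theorem sum_downKernel_occupied (θ : Fin m → ℝ) (S : Fin m → Bool) (A : Finset (Fin m)) :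
    ∑ T : Fin m → Bool, (if ∀ k ∈ A, T k then downKernel θ S T else 0) =
      if ∀ k ∈ A, S k then ∏ k ∈ A, θ k else 0 := by
  -- The summand factorizes over the coordinates of `T`.
  set f : Fin m → Bool → ℝ := fun k b =>
    (if k ∈ A then (if b then 1 else 0) else 1) *
      if S k then (if b then θ k else 1 - θ k) else (if b then 0 else 1)
  have hsummand : ∀ T : Fin m → Bool,
      (if ∀ k ∈ A, T k then downKernel θ S T else 0) = ∏ k, f k (T k) := by
    intro T
    rw [prod_mul_distrib, Fintype.prod_ite_mem, prod_ite_zero, prod_const_one, downKernel]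
    split_ifs <;> simp
  have hfactor : ∀ k, f k true + f k false = if k ∈ A then (if S k then θ k else 0) else 1 := by
    intro k
    by_cases hk : k ∈ A <;> by_cases hS : S k <;> simp [f, hk, hS]
  rw [Fintype.sum_congr _ _ hsummand, ← Fintype.prod_sum]
  simp only [Fintype.sum_bool, hfactor, Fintype.prod_ite_mem, prod_ite_zero]
  congr

noncomputable def occupancy (ν : (Fin m → Bool) → ℝ) (A : Finset (Fin m)) : ℝ :=
  ∑ S : Fin m → Bool, if ∀ k ∈ A, S k then ν S else 0

theorem occupancy_downDist (μ : (Fin m → Bool) → ℝ) (θ : Fin m → ℝ) (A : Finset (Fin m)) :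
    occupancy (downDist μ θ) A = (∏ k ∈ A, θ k) * occupancy μ A := by
  have hpush : ∀ T : Fin m → Bool, (if ∀ k ∈ A, T k then downDist μ θ T else 0) =
      ∑ S, μ S * if ∀ k ∈ A, T k then downKernel θ S T else 0 := by
    intro T
    simp only [mul_ite, mul_zero, sum_ite_irrel, sum_const_zero, downDist]
  rw [occupancy, Fintype.sum_congr _ _ hpush, sum_comm, occupancy, mul_sum]
  refine Fintype.sum_congr _ _ fun S => ?_
  rw [← mul_sum, sum_downKernel_occupied]
  split_ifs <;> ring

theorem occupancy_empty (ν : (Fin m → Bool) → ℝ) : occupancy ν ∅ = ∑ S, ν S := by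
  simp [occupancy]

theorem margin_eq_occupancy (ν : (Fin m → Bool) → ℝ) (i : Fin m) :
    margin ν i = occupancy ν {i} := by
  simp [margin, occupancy]

theorem sum_ite_and_eq_occupancy_pair (ν : (Fin m → Bool) → ℝ) (i j : Fin m) :
    (∑ S : Fin m → Bool, if S i ∧ S j then ν S else 0) = occupancy ν {i, j} := by
  simp [occupancy]

theorem margin_downDist (μ : (Fin m → Bool) → ℝ) (θ : Fin m → ℝ) (i : Fin m) :
    margin (downDist μ θ) i = θ i * margin μ i := by
  simp only [margin_eq_occupancy, occupancy_downDist, prod_singleton]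

theorem downDist_nonneg {μ : (Fin m → Bool) → ℝ} (hμ : ∀ S, 0 ≤ μ S) {θ : Fin m → ℝ}
    (hθ : ∀ i, θ i ∈ Set.Icc 0 1) (T : Fin m → Bool) : 0 ≤ downDist μ θ T :=
  sum_nonneg fun S _ => mul_nonneg (hμ S) (downKernel_nonneg hθ S T)

theorem sum_downDist (μ : (Fin m → Bool) → ℝ) (θ : Fin m → ℝ) :
    ∑ T, downDist μ θ T = ∑ S, μ S := by
  simpa [occupancy_empty] using occupancy_downDist μ θ ∅

noncomputable def covMatrix (ν : (Fin m → Bool) → ℝ) : Matrix (Fin m) (Fin m) ℝ :=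
  of fun i j => occupancy ν {i, j} - margin ν i * margin ν j

theorem covMatrix_isSymm (ν : (Fin m → Bool) → ℝ) : (covMatrix ν).IsSymm :=
  IsSymm.ext fun i j => by simp only [covMatrix, of_apply, pair_comm, mul_comm]

theorem covMatrix_self (ν : (Fin m → Bool) → ℝ) (i : Fin m) :
    covMatrix ν i i = margin ν i * (1 - margin ν i) := by
  simp only [covMatrix, of_apply, insert_eq_of_mem (mem_singleton_self i),
    margin_eq_occupancy]
  ring

theorem covMatrix_downDist (μ : (Fin m → Bool) → ℝ) (θ : Fin m → ℝ) :
    covMatrix (downDist μ θ) = diagonal θ * covMatrix μ * diagonal θ +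
      diagonal fun i => θ i * (1 - θ i) * margin μ i := by
  ext i j
  simp only [Matrix.add_apply, mul_diagonal, diagonal_mul, diagonal_apply]
  rcases eq_or_ne i j with rfl | hij
  · simp only [covMatrix_self, margin_eq_occupancy, occupancy_downDist, prod_singleton, if_true]
    ring
  · simp only [covMatrix, of_apply, margin_eq_occupancy, occupancy_downDist,
      prod_pair hij, prod_singleton, if_neg hij]
    ring

variable {ν : (Fin m → Bool) → ℝ}

theorem occupancy_nonneg (hν : ∀ S, 0 ≤ ν S) (A : Finset (Fin m)) : 0 ≤ occupancy ν A :=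
  sum_nonneg fun S _ => by split_ifs <;> simp [hν S]

theorem occupancy_anti (hν : ∀ S, 0 ≤ ν S) {A B : Finset (Fin m)} (hAB : A ⊆ B) :
    occupancy ν B ≤ occupancy ν A :=
  sum_le_sum fun S _ => by
    split_ifs with hB hA
    · rfl
    · exact absurd (fun k hk => hB k (hAB hk)) hA
    · exact hν S
    · rfl

theorem occupancy_le_occupancy_insert_add (hν : ∀ S, 0 ≤ ν S) (hν1 : ∑ S, ν S = 1)
    (A : Finset (Fin m)) (i : Fin m) :
    occupancy ν A ≤ occupancy ν (insert i A) + (1 - margin ν i) := by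
  rw [← hν1, margin, occupancy, occupancy, ← sum_sub_distrib, ← sum_add_distrib]
  refine sum_le_sum fun S _ => ?_
  have := hν S
  by_cases hi : S i <;> split_ifs <;> simp_all

theorem margin_nonneg (hν : ∀ S, 0 ≤ ν S) (i : Fin m) : 0 ≤ margin ν i :=
  margin_eq_occupancy ν i ▸ occupancy_nonneg hν _

theorem margin_le_one (hν : ∀ S, 0 ≤ ν S) (hν1 : ∑ S, ν S = 1) (i : Fin m) : margin ν i ≤ 1 := by
  simpa [margin_eq_occupancy, occupancy_empty, hν1] using occupancy_anti hν (empty_subset {i})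

theorem covMatrix_eq_zero_of_margin_notMem_Ioo (hν : ∀ S, 0 ≤ ν S) (hν1 : ∑ S, ν S = 1)
    {i : Fin m} (hi : margin ν i ∉ Set.Ioo 0 1) (j : Fin m) : covMatrix ν i j = 0 := by
  have hpair : occupancy ν {i, j} ≤ occupancy ν {j} := occupancy_anti hν (subset_insert i {j})
  simp only [covMatrix, of_apply, margin_eq_occupancy] at hi ⊢
  rcases not_and_or.mp hi with hi0 | hi1
  · have hi0 : occupancy ν {i} = 0 :=
      le_antisymm (not_lt.mp hi0) (occupancy_nonneg hν _)
    have : occupancy ν {i, j} = 0 := le_antisymm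
      (hi0 ▸ occupancy_anti hν (by simp)) (occupancy_nonneg hν _)
    simp [hi0, this]
  · have hi1 : occupancy ν {i} = 1 :=
      le_antisymm (margin_eq_occupancy ν i ▸ margin_le_one hν hν1 i) (not_lt.mp hi1)
    have := occupancy_le_occupancy_insert_add hν hν1 {j} i
    rw [margin_eq_occupancy, hi1] at this
    rw [hi1]
    linarith

theorem mul_corMatrix_eq_covMatrix (hν : ∀ S, 0 ≤ ν S) (hν1 : ∑ S, ν S = 1) {q : Fin m → ℝ}
    (hq : ∀ i, margin ν i ∈ Set.Ioo 0 1 → q i = margin ν i) (i j : Fin m) :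
    q i * corMatrix ν i j = covMatrix ν i j := by
  by_cases hi : 0 < margin ν i ∧ margin ν i < 1
  · rw [hq i hi, corMatrix, of_apply, if_pos hi, sum_ite_and_eq_occupancy_pair, covMatrix,
      of_apply, mul_sub, mul_div_cancel₀ _ hi.1.ne']
  · rw [covMatrix_eq_zero_of_margin_notMem_Ioo hν hν1 hi, corMatrix, of_apply,
      if_neg hi, mul_zero]

theorem dotProduct_mulVec_covMatrix_le_downDist {μ : (Fin m → Bool) → ℝ} (hμ : ∀ S, 0 ≤ μ S)
    {θ : Fin m → ℝ} (hθ : ∀ i, θ i ∈ Set.Icc 0 1) (w : Fin m → ℝ) :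
    (θ * w) ⬝ᵥ covMatrix μ *ᵥ (θ * w) ≤ w ⬝ᵥ covMatrix (downDist μ θ) *ᵥ w := by
  have hdiag : ∀ (d x y : Fin m → ℝ), x ⬝ᵥ diagonal d *ᵥ y = ∑ i, d i * (x i * y i) := by
    intro d x y
    simp only [dotProduct, mulVec_diagonal]
    exact sum_congr rfl fun i _ => by ring
  have hnoise : 0 ≤ w ⬝ᵥ diagonal (fun i => θ i * (1 - θ i) * margin μ i) *ᵥ w := by
    rw [hdiag]
    refine sum_nonneg fun i _ => mul_nonneg ?_ (mul_self_nonneg (w i))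
    exact mul_nonneg (mul_nonneg (hθ i).1 (sub_nonneg.mpr (hθ i).2)) (margin_nonneg hμ i)
  have hθw : diagonal θ *ᵥ w = θ * w := funext fun i => mulVec_diagonal θ w i
  rw [covMatrix_downDist, add_mulVec, dotProduct_add, ← mulVec_mulVec, ← mulVec_mulVec, hθw,
    hdiag]
  calc (θ * w) ⬝ᵥ covMatrix μ *ᵥ (θ * w) = ∑ i, θ i * (w i * (covMatrix μ *ᵥ (θ * w)) i) := by
        simp only [dotProduct, Pi.mul_apply]
        exact sum_congr rfl fun i _ => by ring
    _ ≤ _ := le_add_of_nonneg_right hnoise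

theorem exists_nonneg_hasEigenvalue_corMatrix [Nonempty (Fin m)] (hν : ∀ S, 0 ≤ ν S)
    (hν1 : ∑ S, ν S = 1) {q : Fin m → ℝ} (hq_pos : ∀ i, 0 < q i)
    (hq : ∀ i, margin ν i ∈ Set.Ioo 0 1 → q i = margin ν i) :
    ∃ b, 0 ≤ b ∧ HasEigenvalue (toLin' (corMatrix ν)) b ∧
      ∀ x, x ⬝ᵥ covMatrix ν *ᵥ x ≤ b * ∑ i, q i * x i ^ 2 := by
  obtain ⟨b, hb, hray⟩ := exists_hasEigenvalue_forall_dotProduct_mulVec_le_of_mul_eq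
    (covMatrix_isSymm ν) hq_pos (mul_corMatrix_eq_covMatrix hν hν1 hq)
  refine ⟨b, ?_, hb, hray⟩
  obtain ⟨i⟩ := ‹Nonempty (Fin m)›
  have hvar : 0 ≤ margin ν i * (1 - margin ν i) :=
    mul_nonneg (margin_nonneg hν i) (sub_nonneg.mpr (margin_le_one hν hν1 i))
  have h : covMatrix ν i i ≤ b * q i := by simpa [Pi.single_apply] using hray (Pi.single i 1)
  rw [covMatrix_self] at h
  exact nonneg_of_mul_nonneg_left (hvar.trans h) (hq_pos i)

theorem exists_nonneg_hasEigenvalue_corMatrix_downDist [Nonempty (Fin m)]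
    {μ : (Fin m → Bool) → ℝ} (hμ : ∀ S, 0 ≤ μ S) (hμ1 : ∑ S, μ S = 1) {θ : Fin m → ℝ}
    (hθ : ∀ i, 0 < θ i ∧ θ i ≤ 1) {q : Fin m → ℝ} (hq_pos : ∀ i, 0 < q i)
    (hq : ∀ i, 0 < margin μ i → q i = margin μ i) :
    ∃ b, 0 ≤ b ∧ HasEigenvalue (toLin' (corMatrix (downDist μ θ))) b ∧
      ∀ v, v ⬝ᵥ covMatrix μ *ᵥ v ≤ b * ∑ i, q i * v i ^ 2 / θ i := by
  have hθ' : ∀ i, θ i ∈ Set.Icc 0 1 := fun i => ⟨(hθ i).1.le, (hθ i).2⟩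
  -- `q` must match `margin μ` also where `margin μ i = 1`: there `margin π i = θ i` may lie in
  -- `(0, 1)`.
  obtain ⟨b, hb0, hb, hray⟩ := exists_nonneg_hasEigenvalue_corMatrix (downDist_nonneg hμ hθ')
    ((sum_downDist μ θ).trans hμ1) (q := fun i => θ i * q i)
    (fun i => mul_pos (hθ i).1 (hq_pos i)) fun i hi => by
      rw [margin_downDist] at hi ⊢
      rw [hq i (pos_of_mul_pos_right hi.1 (hθ i).1.le)]
  refine ⟨b, hb0, hb, fun v => ?_⟩
  set w : Fin m → ℝ := fun i => v i / θ i
  have hθw : θ * w = v := funext fun i => mul_div_cancel₀ _ (hθ i).1.ne'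
  have hweight : ∀ i, θ i * q i * w i ^ 2 = q i * v i ^ 2 / θ i := fun i => by
    have := (hθ i).1.ne'
    simp only [w]
    field_simp
  calc v ⬝ᵥ covMatrix μ *ᵥ v ≤ w ⬝ᵥ covMatrix (downDist μ θ) *ᵥ w :=
        hθw ▸ dotProduct_mulVec_covMatrix_le_downDist hμ hθ' w
    _ ≤ b * ∑ i, q i * v i ^ 2 / θ i := by simpa only [hweight] using hray w

theorem stmt_12_general (m : ℕ) (μ : (Fin m → Bool) → ℝ) (θ : Fin m → ℝ)
    (hμ0 : ∀ S, 0 ≤ μ S) (hμ1 : ∑ S : Fin m → Bool, μ S = 1)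
    (hθ : ∀ i, 0 < θ i ∧ θ i ≤ 1) :
    ∀ a : ℝ,
      Module.End.HasEigenvalue (Matrix.toLin' (corMatrix μ)) a →
      ∃ b : ℝ,
        Module.End.HasEigenvalue (Matrix.toLin' (corMatrix (downDist μ θ))) b ∧
          a ≤ b * ⨆ i : Fin m, (θ i)⁻¹ := by
  intro a ha
  obtain ⟨v, hv⟩ := ha.exists_hasEigenvector
  obtain ⟨i₀, hi₀⟩ := Function.ne_iff.mp hv.2
  have : Nonempty (Fin m) := ⟨i₀⟩
  set q : Fin m → ℝ := fun i => if 0 < margin μ i then margin μ i else 1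
  have hq_pos : ∀ i, 0 < q i := fun i => by
    by_cases h : 0 < margin μ i <;> simp [q, h]
  obtain ⟨b, hb0, hb, hray⟩ := exists_nonneg_hasEigenvalue_corMatrix_downDist hμ0 hμ1 hθ hq_pos
    fun i hi => if_pos hi
  refine ⟨b, hb, ?_⟩
  set M := ⨆ i, (θ i)⁻¹
  have hM : ∀ i, (θ i)⁻¹ ≤ M := le_ciSup (Set.finite_range _).bddAbove
  set N := ∑ i, q i * v i ^ 2
  have hN : 0 < N := sum_pos' (fun i _ => mul_nonneg (hq_pos i).le (sq_nonneg _))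
    ⟨i₀, mem_univ _, mul_pos (hq_pos i₀) (sq_pos_of_ne_zero hi₀)⟩
  have hNM : ∑ i, q i * v i ^ 2 / θ i ≤ M * N := by
    rw [mul_sum]
    refine sum_le_sum fun i _ => ?_
    rw [div_eq_inv_mul]
    exact mul_le_mul_of_nonneg_right (hM i) (mul_nonneg (hq_pos i).le (sq_nonneg _))
  refine le_of_mul_le_mul_right ?_ hN
  calc a * N = v ⬝ᵥ covMatrix μ *ᵥ v :=
        mul_sum_mul_sq_eq_dotProduct_mulVec
          (mul_corMatrix_eq_covMatrix hμ0 hμ1 fun i hi => if_pos hi.1)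
          (by simpa using hv.apply_eq_smul)
    _ ≤ b * ∑ i, q i * v i ^ 2 / θ i := hray v
    _ ≤ b * M * N := by rw [mul_assoc]; exact mul_le_mul_of_nonneg_left hNM hb0

/-- Spectral independence under the down operator:
`λ_max(Cor_μ) ≤ λ_max(Cor_π) · max_i θᵢ⁻¹` where `π = μ D_{1→θ}`.
Formally, every real eigenvalue `a` of `Cor_μ` is bounded by
`b · sup_i θᵢ⁻¹` for some real eigenvalue `b` of `Cor_π`. -/
theorem stmt_12 (m : ℕ) (hm : 0 < m) (μ : (Fin m → Bool) → ℝ) (θ : Fin m → ℝ)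
    (hμ0 : ∀ S, 0 ≤ μ S) (hμ1 : ∑ S : Fin m → Bool, μ S = 1)
    (hθ : ∀ i, 0 < θ i ∧ θ i ≤ 1) :
    ∀ a : ℝ,
      Module.End.HasEigenvalue (Matrix.toLin' (corMatrix μ)) a →
      ∃ b : ℝ,
        Module.End.HasEigenvalue (Matrix.toLin' (corMatrix (downDist μ θ))) b ∧
          a ≤ b * ⨆ i : Fin m, (θ i)⁻¹ :=
  stmt_12_general m μ θ hμ0 hμ1 hθ
end

section
/- Let α ≥ 1 and θ ∈ (0,1), and let E : [0,θ] → ℝ be twice differentiable with E' ≤ 0 on [0,θ], satisfying (1−t)·E''(t) ≤ (α−1)·(−E'(t)) for all t ∈ [0,θ]. Then the function t ↦ −E'(t)/(1−t)^{α−1} is nondecreasing on [0,θ], and consequently E(0) − E(θ) ≥ ((1 − (1−θ)^α)/α) · (−E'(0)). -/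
open Set Real

/-!
Writing `u(t) = -E'(t)` and `v(t) = (1-t)^(α-1)`, the quotient rule gives
`(u / v)' = (1-t)^(α-2) ((1-t) (-E'') + (α-1) (-E')) / v²`, which is nonnegative by the hypothesis,
so `u / v` is nondecreasing. Hence `-E'(t) ≥ -E'(0) (1-t)^(α-1)`, and integrating over `[0,θ]`
(through the monotonicity of `t ↦ -E t + c (1-t)^α / α`) gives the entropy-loss bound.
-/

lemma monotoneOn_Icc_of_hasDerivAt_nonneg {a b : ℝ} {f f' : ℝ → ℝ}
    (hf : ∀ x ∈ Icc a b, HasDerivAt f (f' x) x) (hf'₀ : ∀ x ∈ Ioo a b, 0 ≤ f' x) :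
    MonotoneOn f (Icc a b) :=
  monotoneOn_of_hasDerivWithinAt_nonneg (convex_Icc a b)
    (fun x hx ↦ (hf x hx).continuousAt.continuousWithinAt)
    (fun x hx ↦ (hf x (interior_subset hx)).hasDerivWithinAt)
    (by rwa [interior_Icc])

lemma hasDerivAt_one_sub_rpow {t : ℝ} (ht : t < 1) (p : ℝ) :
    HasDerivAt (fun s ↦ (1 - s) ^ p) (-(p * (1 - t) ^ (p - 1))) t := by
  simpa using ((hasDerivAt_id t).const_sub 1).rpow_const (p := p) (Or.inl (sub_pos.2 ht).ne')

lemma monotoneOn_neg_deriv_div_one_sub_rpow {α a b : ℝ} (hb : b < 1) {E' E'' : ℝ → ℝ}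
    (hE'' : ∀ t ∈ Icc a b, HasDerivAt E' (E'' t) t)
    (hineq : ∀ t ∈ Icc a b, (1 - t) * E'' t ≤ (α - 1) * (-E' t)) :
    MonotoneOn (fun t ↦ -E' t / (1 - t) ^ (α - 1)) (Icc a b) := by
  have hpos : ∀ t ∈ Icc a b, 0 < 1 - t := fun t ht ↦ by linarith [ht.2]
  refine monotoneOn_Icc_of_hasDerivAt_nonneg
    (fun t ht ↦ (hE'' t ht).neg.div (hasDerivAt_one_sub_rpow (ht.2.trans_lt hb) (α - 1))
      (rpow_pos_of_pos (hpos t ht) _).ne') fun t ht ↦ ?_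
  have h1t := hpos t (Ioo_subset_Icc_self ht)
  have hv := rpow_pos_of_pos h1t (α - 1)
  rw [rpow_sub_one h1t.ne' (α - 1)]
  generalize (1 - t) ^ (α - 1) = v at hv ⊢
  have hnum : -E'' t * v - (-E') t * -((α - 1) * (v / (1 - t)))
      = v / (1 - t) * ((1 - t) * -E'' t + (α - 1) * -E' t) := by
    rw [Pi.neg_apply]
    field_simp
    ring
  rw [hnum]
  have := hineq t (Ioo_subset_Icc_self ht)
  exact div_nonneg (mul_nonneg (by positivity) (by linarith)) (sq_nonneg _)

lemma one_sub_rpow_div_mul_le_sub {α θ c : ℝ} (hα : α ≠ 0) (hθ0 : 0 ≤ θ) (hθ1 : θ < 1)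
    {E E' : ℝ → ℝ} (hE' : ∀ t ∈ Icc 0 θ, HasDerivAt E (E' t) t)
    (hbound : ∀ t ∈ Icc 0 θ, c * (1 - t) ^ (α - 1) ≤ -E' t) :
    (1 - (1 - θ) ^ α) / α * c ≤ E 0 - E θ := by
  have hmono : MonotoneOn (fun t ↦ -E t + c * (1 - t) ^ α / α) (Icc 0 θ) := by
    refine monotoneOn_Icc_of_hasDerivAt_nonneg (fun t ht ↦ (hE' t ht).neg.add
      (((hasDerivAt_one_sub_rpow (ht.2.trans_lt hθ1) α).const_mul c).div_const α))
      fun t ht ↦ ?_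
    have := hbound t (Ioo_subset_Icc_self ht)
    field_simp
    linarith
  have h := hmono ⟨le_rfl, hθ0⟩ ⟨hθ0, le_rfl⟩ hθ0
  simp only [sub_zero, one_rpow, mul_one] at h
  have hlhs : (1 - (1 - θ) ^ α) / α * c = c / α - c * (1 - θ) ^ α / α := by
    field_simp
  linarith

theorem stmt_16_general (α θ : ℝ) (hα : 1 ≤ α) (hθ0 : 0 < θ) (hθ1 : θ < 1)
    (E E' E'' : ℝ → ℝ)
    (hE' : ∀ t ∈ Icc (0 : ℝ) θ, HasDerivAt E (E' t) t)
    (hE'' : ∀ t ∈ Icc (0 : ℝ) θ, HasDerivAt E' (E'' t) t)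
    (hineq : ∀ t ∈ Icc (0 : ℝ) θ, (1 - t) * E'' t ≤ (α - 1) * (-E' t)) :
    MonotoneOn (fun t => -E' t / (1 - t) ^ (α - 1)) (Icc (0 : ℝ) θ) ∧
      ((1 - (1 - θ) ^ α) / α) * (-E' 0) ≤ E 0 - E θ := by
  have hmono := monotoneOn_neg_deriv_div_one_sub_rpow hθ1 hE'' hineq
  refine ⟨hmono, one_sub_rpow_div_mul_le_sub (by linarith) hθ0.le hθ1 hE' fun t ht ↦ ?_⟩
  have h := hmono ⟨le_rfl, hθ0.le⟩ ht ht.1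
  simp only [sub_zero, one_rpow, div_one] at h
  rwa [le_div_iff₀ (rpow_pos_of_pos (by linarith [ht.2]) _)] at h

/-- Differential inequality lemma: if `α ≥ 1`, `θ ∈ (0,1)`, `E` has first and
second derivatives `E'`, `E''` on `[0,θ]` with `E' ≤ 0` and
`(1−t) E''(t) ≤ (α−1)(−E'(t))` there, then `t ↦ −E'(t)/(1−t)^{α−1}` is
nondecreasing on `[0,θ]` and
`E(0) − E(θ) ≥ ((1 − (1−θ)^α)/α) (−E'(0))`. -/
theorem stmt_16 (α θ : ℝ) (hα : 1 ≤ α) (hθ0 : 0 < θ) (hθ1 : θ < 1)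
    (E E' E'' : ℝ → ℝ)
    (hE' : ∀ t ∈ Icc (0 : ℝ) θ, HasDerivAt E (E' t) t)
    (hE'' : ∀ t ∈ Icc (0 : ℝ) θ, HasDerivAt E' (E'' t) t)
    (hneg : ∀ t ∈ Icc (0 : ℝ) θ, E' t ≤ 0)
    (hineq : ∀ t ∈ Icc (0 : ℝ) θ, (1 - t) * E'' t ≤ (α - 1) * (-E' t)) :
    MonotoneOn (fun t => -E' t / (1 - t) ^ (α - 1)) (Icc (0 : ℝ) θ) ∧
      ((1 - (1 - θ) ^ α) / α) * (-E' 0) ≤ E 0 - E θ :=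
  stmt_16_general α θ hα hθ0 hθ1 E E' E'' hE' hE'' hineq
end

section
/- Let β, γ ≥ 0 with 0 < βγ < 1, let d ≥ 2 be an integer, and suppose (β, γ, λ) is critically d-unique, i.e., the unique positive fixed point x̂ of f_d(x) = λ((βx+1)/(x+γ))^d satisfies d(1−βγ)x̂/((βx̂+1)(x̂+γ)) = 1. Then for every θ with 1 ≤ θ ≤ 1/√(βγ), the tilted parameters (θβ, θγ, λ) are d-unique with slack at least (θ−1)√(βγ)/(1−√(βγ)); i.e., the unique positive fixed point x̂_θ of x ↦ λ((θβx+1)/(x+θγ))^d satisfies d(1−θ²βγ)x̂_θ/((θβx̂_θ+1)(x̂_θ+θγ)) ≤ 1 − (θ−1)√(βγ)/(1−√(βγ)). -/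
/-!
Write `s = √(βγ)` and `t = θs`. The fixed point of `f_d` is the solution of
`x ((x + γ)/(βx + 1))^d = λ`, whose left side is strictly increasing in `x`; tilting by `θ ≥ 1`
lowers it where `βx² ≥ γ` and raises it where `βx² ≤ γ`. Hence the tilted fixed point moves away
from `√(γ/β)`: `(x_θ - x̂)(β x_θ x̂ - γ) ≥ 0`. Criticality and AM-GM give `d(1 - s) ≥ 1 + s`, and
together with the comparison of fixed points an explicit polynomial identity shows
`d(1 + t)(1 - s) x_θ ≤ (θβx_θ + 1)(x_θ + θγ)`, which is the slack bound after multiplying by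
`(1 - t)/(1 - s)`.
-/

open Real Set

namespace EdgeTilt

noncomputable section

def edgeRatio (β γ x : ℝ) : ℝ := (x + γ) / (β * x + 1)

/-- The fixed points of `x ↦ λ((βx + 1)/(x + γ))^d` are the solutions of `fixedPointMap β γ d x = λ`. -/
def fixedPointMap (β γ : ℝ) (d : ℕ) (x : ℝ) : ℝ := x * edgeRatio β γ x ^ d

end

variable {β γ θ x : ℝ}

lemma edgeRatio_pos (hβ : 0 ≤ β) (hγ : 0 ≤ γ) (hx : 0 < x) : 0 < edgeRatio β γ x := by
  unfold edgeRatio; positivity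

lemma edgeRatio_monotoneOn (hβ : 0 ≤ β) (hβγ : β * γ ≤ 1) :
    MonotoneOn (edgeRatio β γ) (Ici 0) := by
  intro x (hx : 0 ≤ x) y (hy : 0 ≤ y) hxy
  unfold edgeRatio
  rw [div_le_div_iff₀ (by positivity) (by positivity)]
  nlinarith [mul_nonneg (sub_nonneg.2 hxy) (sub_nonneg.2 hβγ)]

lemma edgeRatio_tilt_le (hβ : 0 ≤ β) (hx : 0 ≤ x) (hθ : 1 ≤ θ) (hγx : γ ≤ β * x ^ 2) :
    edgeRatio (θ * β) (θ * γ) x ≤ edgeRatio β γ x := by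
  unfold edgeRatio
  rw [div_le_div_iff₀ (by positivity) (by positivity)]
  nlinarith [mul_nonneg (sub_nonneg.2 hθ) (sub_nonneg.2 hγx)]

lemma edgeRatio_le_tilt (hβ : 0 ≤ β) (hx : 0 ≤ x) (hθ : 1 ≤ θ) (hγx : β * x ^ 2 ≤ γ) :
    edgeRatio β γ x ≤ edgeRatio (θ * β) (θ * γ) x := by
  unfold edgeRatio
  rw [div_le_div_iff₀ (by positivity) (by positivity)]
  nlinarith [mul_nonneg (sub_nonneg.2 hθ) (sub_nonneg.2 hγx)]

section FixedPointMap

variable {d : ℕ}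

lemma fixedPointMap_eq_of_eq {lam : ℝ} (hβx : β * x + 1 ≠ 0) (hxγ : x + γ ≠ 0)
    (hfix : x = lam * ((β * x + 1) / (x + γ)) ^ d) : fixedPointMap β γ d x = lam := by
  rw [fixedPointMap, edgeRatio, ← inv_div, inv_pow, ← div_eq_mul_inv, div_eq_iff (by positivity)]
  exact hfix

lemma fixedPointMap_strictMonoOn (hβ : 0 ≤ β) (hγ : 0 ≤ γ) (hβγ : β * γ ≤ 1) :
    StrictMonoOn (fixedPointMap β γ d) (Ioi 0) := by
  intro x (hx : 0 < x) y (hy : 0 < y) hxy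
  have hratio := edgeRatio_monotoneOn hβ hβγ (mem_Ici.2 hx.le) (mem_Ici.2 hy.le) hxy.le
  exact mul_lt_mul hxy (pow_le_pow_left₀ (edgeRatio_pos hβ hγ hx).le hratio d)
    (pow_pos (edgeRatio_pos hβ hγ hx) d) hy.le

lemma fixedPointMap_tilt_le (hβ : 0 ≤ β) (hγ : 0 ≤ γ) (hx : 0 < x) (hθ : 1 ≤ θ)
    (hγx : γ ≤ β * x ^ 2) : fixedPointMap (θ * β) (θ * γ) d x ≤ fixedPointMap β γ d x := by
  have hθ0 : 0 ≤ θ := zero_le_one.trans hθ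
  unfold fixedPointMap
  gcongr
  · exact (edgeRatio_pos (by positivity) (by positivity) hx).le
  · exact edgeRatio_tilt_le hβ hx.le hθ hγx

lemma fixedPointMap_le_tilt (hβ : 0 ≤ β) (hγ : 0 ≤ γ) (hx : 0 < x) (hθ : 1 ≤ θ)
    (hγx : β * x ^ 2 ≤ γ) : fixedPointMap β γ d x ≤ fixedPointMap (θ * β) (θ * γ) d x := by
  unfold fixedPointMap
  gcongr
  · exact (edgeRatio_pos hβ hγ hx).le
  · exact edgeRatio_le_tilt hβ hx.le hθ hγx

lemma tilted_fixedPoint_comparison {x₀ x₁ : ℝ} (hβ : 0 ≤ β) (hγ : 0 ≤ γ) (hθ : 1 ≤ θ)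
    (hθβγ : θ * β * (θ * γ) ≤ 1) (hx₀ : 0 < x₀) (hx₁ : 0 < x₁)
    (heq : fixedPointMap (θ * β) (θ * γ) d x₁ = fixedPointMap β γ d x₀) :
    0 ≤ (x₁ - x₀) * (β * x₁ * x₀ - γ) := by
  have hθ0 : 0 ≤ θ := zero_le_one.trans hθ
  have hmono := fixedPointMap_strictMonoOn (d := d) (by positivity : 0 ≤ θ * β)
    (by positivity : 0 ≤ θ * γ) hθβγ
  rcases le_total γ (β * x₀ ^ 2) with hγx | hγx
  · have hle : x₀ ≤ x₁ := (hmono.le_iff_le hx₀ hx₁).1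
      ((fixedPointMap_tilt_le hβ hγ hx₀ hθ hγx).trans heq.ge)
    exact mul_nonneg (sub_nonneg.2 hle) (by nlinarith [mul_le_mul_of_nonneg_left hle hβ])
  · have hle : x₁ ≤ x₀ := (hmono.le_iff_le hx₁ hx₀).1
      (heq.le.trans (fixedPointMap_le_tilt hβ hγ hx₀ hθ hγx))
    exact mul_nonneg_of_nonpos_of_nonpos (sub_nonpos.2 hle)
      (by nlinarith [mul_le_mul_of_nonneg_left hle hβ])

end FixedPointMap

section Slack

variable {s d x₀ x₁ : ℝ}

lemma one_add_le_of_critical (hβ : 0 ≤ β) (hγ : 0 ≤ γ) (hs : s ^ 2 = β * γ) (hs0 : 0 < s)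
    (hx₀ : 0 < x₀) (hcrit : d * (1 - β * γ) * x₀ = (β * x₀ + 1) * (x₀ + γ)) :
    1 + s ≤ d * (1 - s) := by
  have hamgm : 2 * s * x₀ ≤ β * x₀ ^ 2 + γ := by
    refine (pow_le_pow_iff_left₀ (by positivity) (by positivity) two_ne_zero).1 ?_
    nlinarith [sq_nonneg (β * x₀ ^ 2 - γ)]
  have h : (1 + s) * x₀ * (1 + s) ≤ (1 + s) * x₀ * (d * (1 - s)) := by
    rw [← hs] at hcrit
    nlinarith
  exact le_of_mul_le_mul_left h (by positivity)

lemma critical_tilt_mul_le (hβ : 0 ≤ β) (hγ : 0 ≤ γ) (hs : s ^ 2 = β * γ) (hs0 : 0 < s)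
    (hθ : 1 ≤ θ) (hx₀ : 0 < x₀) (hx₁ : 0 < x₁)
    (hcrit : d * (1 - β * γ) * x₀ = (β * x₀ + 1) * (x₀ + γ))
    (hcmp : 0 ≤ (x₁ - x₀) * (β * x₁ * x₀ - γ)) :
    d * (1 + θ * s) * (1 - s) * x₁ ≤ (θ * β * x₁ + 1) * (x₁ + θ * γ) := by
  have key : s * x₀ * ((θ * β * x₁ + 1) * (x₁ + θ * γ) - d * (1 + θ * s) * (1 - s) * x₁)
      = θ * s * ((x₁ - x₀) * (β * x₁ * x₀ - γ))
        + x₀ * x₁ * ((θ * s - s) * (d * (1 - s) - (1 - θ * s ^ 2))) := by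
    linear_combination (-(θ * s * x₁)) * hcrit + (θ * s * x₀ * x₁ * (d + 1 - θ)) * hs
  have hd : 0 ≤ d * (1 - s) - (1 - θ * s ^ 2) := by
    nlinarith [one_add_le_of_critical hβ hγ hs hs0 hx₀ hcrit]
  have hrhs : 0 ≤ s * x₀ * ((θ * β * x₁ + 1) * (x₁ + θ * γ) - d * (1 + θ * s) * (1 - s) * x₁) := by
    rw [key]
    have hθs : 0 ≤ θ * s - s := by nlinarith
    positivity
  linarith [nonneg_of_mul_nonneg_right hrhs (by positivity)]

lemma critical_tilt_slack (hβ : 0 ≤ β) (hγ : 0 ≤ γ) (hs : s ^ 2 = β * γ) (hs0 : 0 < s)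
    (hs1 : s < 1) (hθ : 1 ≤ θ) (hθs : θ * s ≤ 1) (hx₀ : 0 < x₀) (hx₁ : 0 < x₁)
    (hcrit : d * (1 - β * γ) * x₀ = (β * x₀ + 1) * (x₀ + γ))
    (hcmp : 0 ≤ (x₁ - x₀) * (β * x₁ * x₀ - γ)) :
    d * (1 - θ ^ 2 * β * γ) * x₁ / ((θ * β * x₁ + 1) * (x₁ + θ * γ)) ≤
      1 - (θ - 1) * s / (1 - s) := by
  have hθ0 : 0 ≤ θ := zero_le_one.trans hθ
  have hs1' : 0 < 1 - s := sub_pos.2 hs1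
  rw [div_le_iff₀ (by positivity)]
  calc d * (1 - θ ^ 2 * β * γ) * x₁
      = (1 - θ * s) / (1 - s) * (d * (1 + θ * s) * (1 - s) * x₁) := by
        rw [div_mul_eq_mul_div, eq_div_iff hs1'.ne']
        linear_combination (d * θ ^ 2 * x₁ * (1 - s)) * hs
    _ ≤ (1 - θ * s) / (1 - s) * ((θ * β * x₁ + 1) * (x₁ + θ * γ)) :=
        mul_le_mul_of_nonneg_left (critical_tilt_mul_le hβ hγ hs hs0 hθ hx₀ hx₁ hcrit hcmp)
          (div_nonneg (sub_nonneg.2 hθs) hs1'.le)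
    _ = (1 - (θ - 1) * s / (1 - s)) * ((θ * β * x₁ + 1) * (x₁ + θ * γ)) := by
        congr 1
        field_simp
        ring

end Slack

end EdgeTilt

open EdgeTilt in
theorem stmt_19_general (β γ lam : ℝ) (d : ℕ)
    (hβ : 0 ≤ β) (hγ : 0 ≤ γ) (hpos : 0 < β * γ) (hanti : β * γ < 1)
    (xhat : ℝ) (hxhat : 0 < xhat)
    (hfix : xhat = lam * ((β * xhat + 1) / (xhat + γ)) ^ d)
    (hcrit : (d : ℝ) * (1 - β * γ) * xhat / ((β * xhat + 1) * (xhat + γ)) = 1) :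
    ∀ θ : ℝ, 1 ≤ θ → θ ≤ 1 / Real.sqrt (β * γ) →
      ∀ xhatθ : ℝ, 0 < xhatθ →
        xhatθ = lam * ((θ * β * xhatθ + 1) / (xhatθ + θ * γ)) ^ d →
        (d : ℝ) * (1 - θ ^ 2 * β * γ) * xhatθ /
            ((θ * β * xhatθ + 1) * (xhatθ + θ * γ)) ≤
          1 - (θ - 1) * Real.sqrt (β * γ) / (1 - Real.sqrt (β * γ)) := by
  intro θ hθ hθs xθ hxθ hfixθ
  set s := Real.sqrt (β * γ)
  have hs : s ^ 2 = β * γ := sq_sqrt hpos.le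
  have hs0 : 0 < s := sqrt_pos.2 hpos
  have hs1 : s < 1 := (sqrt_lt' one_pos).2 (by simpa using hanti)
  have hθs' : θ * s ≤ 1 := (le_div_iff₀ hs0).1 hθs
  have hθ0 : 0 ≤ θ := zero_le_one.trans hθ
  have htilt : θ * β * (θ * γ) ≤ 1 := by
    rw [show θ * β * (θ * γ) = (θ * s) ^ 2 by rw [mul_pow, hs]; ring]
    exact pow_le_one₀ (by positivity) hθs'
  have hcmp := tilted_fixedPoint_comparison hβ hγ hθ htilt hxhat hxθ
    ((fixedPointMap_eq_of_eq (by positivity) (by positivity) hfixθ).trans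
      (fixedPointMap_eq_of_eq (by positivity) (by positivity) hfix).symm)
  rw [div_eq_one_iff_eq (by positivity)] at hcrit
  exact critical_tilt_slack hβ hγ hs hs0 hs1 hθ hθs' hxhat hxθ hcrit hcmp

/-- Edge-tilting preserves uniqueness with slack: if `(β, γ, λ)` is critically
`d`-unique, i.e. its unique positive fixed point `xhat` of
`f_d(x) = λ((βx+1)/(x+γ))^d` satisfies `d(1−βγ)xhat/((βxhat+1)(xhat+γ)) = 1`, then
for every `θ ∈ [1, 1/√(βγ)]` the tilted parameters `(θβ, θγ, λ)` are
`d`-unique with slack at least `(θ−1)√(βγ)/(1−√(βγ))`: the unique positive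
fixed point `xhat_θ` of `x ↦ λ((θβx+1)/(x+θγ))^d` satisfies
`d(1−θ²βγ) xhat_θ/((θβ xhat_θ+1)(xhat_θ+θγ)) ≤ 1 − (θ−1)√(βγ)/(1−√(βγ))`. -/
theorem stmt_19 (β γ lam : ℝ) (d : ℕ)
    (hβ : 0 ≤ β) (hγ : 0 ≤ γ) (hpos : 0 < β * γ) (hanti : β * γ < 1)
    (hlam : 0 < lam) (hd : 2 ≤ d)
    (xhat : ℝ) (hxhat : 0 < xhat)
    (hfix : xhat = lam * ((β * xhat + 1) / (xhat + γ)) ^ d)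
    (hcrit : (d : ℝ) * (1 - β * γ) * xhat / ((β * xhat + 1) * (xhat + γ)) = 1) :
    ∀ θ : ℝ, 1 ≤ θ → θ ≤ 1 / Real.sqrt (β * γ) →
      ∀ xhatθ : ℝ, 0 < xhatθ →
        xhatθ = lam * ((θ * β * xhatθ + 1) / (xhatθ + θ * γ)) ^ d →
        (d : ℝ) * (1 - θ ^ 2 * β * γ) * xhatθ /
            ((θ * β * xhatθ + 1) * (xhatθ + θ * γ)) ≤
          1 - (θ - 1) * Real.sqrt (β * γ) / (1 - Real.sqrt (β * γ)) :=
  stmt_19_general β γ lam d hβ hγ hpos hanti xhat hxhat hfix hcrit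
end
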